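/- Let ρ, ρ̄ : ℝ^d → ℝ be nonnegative integrable functions, both strictly positive almost everywhere. Then (∫ |ρ - ρ̄| dx)² ≤ (∫ (ρ + ρ̄) dx) · (∫ min(1/ρ̄, 1/ρ)·(ρ - ρ̄)² dx). -/

import Mathlib

open MeasureTheory

/-! Since `(ρ + ρb) · min(1/ρb, 1/ρ) ≥ 1`, we have `|ρ - ρb| ≤ √(ρ + ρb) · √(min(1/ρb, 1/ρ) · (ρ - ρb)²)`
pointwise, and Cauchy–Schwarz (Hölder with `p = q = 2`) applied to the right-hand side gives the
claim. -/

lemma one_le_add_mul_min_inv {a b : ℝ} (ha : 0 < a) (hb : 0 < b) :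
    1 ≤ (a + b) * min b⁻¹ a⁻¹ := by
  rcases le_total a b with hab | hab
  · rw [min_eq_left (inv_anti₀ ha hab), le_mul_inv_iff₀ hb]
    linarith
  · rw [min_eq_right (inv_anti₀ hb hab), le_mul_inv_iff₀ ha]
    linarith

section CauchySchwarz

variable {α : Type*} [MeasurableSpace α] {μ : Measure α}

lemma MeasureTheory.Integrable.memLp_two_sqrt {f : α → ℝ} (hf : Integrable f μ) (hf0 : 0 ≤ᵐ[μ] f) :
    MemLp (fun x => √(f x)) 2 μ := by
  refine (memLp_two_iff_integrable_sq
    (Real.continuous_sqrt.comp_aestronglyMeasurable hf.aestronglyMeasurable)).2 ?_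
  refine hf.congr ?_
  filter_upwards [hf0] with x hx
  exact (Real.sq_sqrt hx).symm

lemma integral_sqrt_mul_sqrt_le {f g : α → ℝ} (hf0 : 0 ≤ᵐ[μ] f) (hg0 : 0 ≤ᵐ[μ] g)
    (hf : Integrable f μ) (hg : Integrable g μ) :
    ∫ x, √(f x) * √(g x) ∂μ ≤ √(∫ x, f x ∂μ) * √(∫ x, g x ∂μ) := by
  have key := integral_mul_le_Lp_mul_Lq_of_nonneg Real.HolderConjugate.two_two
    (Filter.Eventually.of_forall fun x => Real.sqrt_nonneg (f x))
    (Filter.Eventually.of_forall fun x => Real.sqrt_nonneg (g x))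
    (by simpa using hf.memLp_two_sqrt hf0) (by simpa using hg.memLp_two_sqrt hg0)
  have sq_sqrt_ae {h : α → ℝ} (h0 : 0 ≤ᵐ[μ] h) : ∫ x, √(h x) ^ (2 : ℝ) ∂μ = ∫ x, h x ∂μ := by
    refine integral_congr_ae ?_
    filter_upwards [h0] with x hx
    rw [Real.rpow_two, Real.sq_sqrt hx]
  rwa [sq_sqrt_ae hf0, sq_sqrt_ae hg0, ← Real.sqrt_eq_rpow, ← Real.sqrt_eq_rpow] at key

theorem sq_integral_abs_le_integral_mul_integral {h f g : α → ℝ}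
    (hh : AEStronglyMeasurable h μ) (hf0 : 0 ≤ᵐ[μ] f) (hg0 : 0 ≤ᵐ[μ] g)
    (hf : Integrable f μ) (hg : Integrable g μ) (hfg : ∀ᵐ x ∂μ, h x ^ 2 ≤ f x * g x) :
    (∫ x, |h x| ∂μ) ^ 2 ≤ (∫ x, f x ∂μ) * ∫ x, g x ∂μ := by
  have habs_le : ∀ᵐ x ∂μ, |h x| ≤ √(f x) * √(g x) := by
    filter_upwards [hf0, hfg] with x hx hx'
    rw [← Real.sqrt_mul hx, ← Real.sqrt_sq_eq_abs]
    exact Real.sqrt_le_sqrt hx'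
  have hprod : Integrable (fun x => √(f x) * √(g x)) μ :=
    (hf.memLp_two_sqrt hf0).integrable_mul (hg.memLp_two_sqrt hg0)
  have habs : Integrable (fun x => |h x|) μ :=
    hprod.mono' (continuous_abs.comp_aestronglyMeasurable hh)
      (by simpa only [Real.norm_eq_abs, abs_abs] using habs_le)
  calc (∫ x, |h x| ∂μ) ^ 2 ≤ (√(∫ x, f x ∂μ) * √(∫ x, g x ∂μ)) ^ 2 := by
        gcongr
        exact (integral_mono_ae habs hprod habs_le).trans
          (integral_sqrt_mul_sqrt_le hf0 hg0 hf hg)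
    _ = (∫ x, f x ∂μ) * ∫ x, g x ∂μ := by
        rw [mul_pow, Real.sq_sqrt (integral_nonneg_of_ae hf0),
          Real.sq_sqrt (integral_nonneg_of_ae hg0)]

end CauchySchwarz

theorem L1_diff_sq_le_general (d : ℕ) (ρ ρb : EuclideanSpace ℝ (Fin d) → ℝ)
    (hρi : Integrable ρ) (hρbi : Integrable ρb)
    (hρpos : ∀ᵐ x, 0 < ρ x) (hρbpos : ∀ᵐ x, 0 < ρb x)
    (hmin : Integrable (fun x => min (ρb x)⁻¹ (ρ x)⁻¹ * (ρ x - ρb x) ^ 2)) :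
    (∫ x, |ρ x - ρb x|) ^ 2
      ≤ (∫ x, (ρ x + ρb x)) * ∫ x, min (ρb x)⁻¹ (ρ x)⁻¹ * (ρ x - ρb x) ^ 2 := by
  refine sq_integral_abs_le_integral_mul_integral
    (hρi.aestronglyMeasurable.sub hρbi.aestronglyMeasurable) ?_ ?_ (hρi.add hρbi) hmin ?_
  · filter_upwards [hρpos, hρbpos] with x hx hbx
    positivity
  · filter_upwards [hρpos, hρbpos] with x hx hbx
    positivity
  · filter_upwards [hρpos, hρbpos] with x hx hbx
    calc (ρ x - ρb x) ^ 2 ≤ (ρ x + ρb x) * min (ρb x)⁻¹ (ρ x)⁻¹ * (ρ x - ρb x) ^ 2 :=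
          le_mul_of_one_le_left (sq_nonneg _) (one_le_add_mul_min_inv hx hbx)
      _ = (ρ x + ρb x) * (min (ρb x)⁻¹ (ρ x)⁻¹ * (ρ x - ρb x) ^ 2) := mul_assoc _ _ _

/-- For nonnegative integrable `ρ, ρb : ℝ^d → ℝ`, both strictly positive a.e.,
`(∫ |ρ - ρb|)² ≤ (∫ (ρ + ρb)) · (∫ min(1/ρb, 1/ρ)·(ρ - ρb)²)`. -/
theorem L1_diff_sq_le (d : ℕ) (ρ ρb : EuclideanSpace ℝ (Fin d) → ℝ)
    (hρ0 : ∀ x, 0 ≤ ρ x) (hρb0 : ∀ x, 0 ≤ ρb x)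
    (hρi : Integrable ρ) (hρbi : Integrable ρb)
    (hρpos : ∀ᵐ x, 0 < ρ x) (hρbpos : ∀ᵐ x, 0 < ρb x)
    (hmin : Integrable (fun x => min (ρb x)⁻¹ (ρ x)⁻¹ * (ρ x - ρb x) ^ 2)) :
    (∫ x, |ρ x - ρb x|) ^ 2
      ≤ (∫ x, (ρ x + ρb x)) * ∫ x, min (ρb x)⁻¹ (ρ x)⁻¹ * (ρ x - ρb x) ^ 2 :=
  L1_diff_sq_le_general d ρ ρb hρi hρbi hρpos hρbpos hmin
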